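/- Let X ⊂ ℝ^{n_x} be a nonempty compact set, let x : [0,∞) → ℝ^{n_x} be differentiable with x'(t) = f(x(t)) and x(t) ∈ X for all t ≥ 0, and let ẑ : [0,∞) → ℝ^{n_z} be differentiable with ẑ'(t) = A ẑ(t) + B h(x(t)) for all t ≥ 0. Let T̂ : ℝ^{n_x} → ℝ^{n_z} be continuously differentiable with PDE residual R, set R̄ := sup_{x∈X} ‖R(x)‖ and e_z(t) := ẑ(t) − T̂(x(t)). Let Q ∈ ℝ^{n_z×n_z} and P ∈ ℝ^{n_z×n_z} be symmetric positive definite with P A + Aᵀ P = −Q. Then for every ε ∈ (0,1), setting c := (1−ε)·λ_min(Q)/λ_max(P) and V₀ := e_z(0)ᵀ P e_z(0), one has for all t ≥ 0: ‖e_z(t)‖ ≤ √(V₀/λ_min(P))·e^{−ct/2} + √(1/(ε·c·λ_min(P)))·‖Q^{−1/2}P‖·R̄. -/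

import Mathlib

open Filter Matrix

/-- Euclidean space `ℝ^n`. -/
abbrev E (n : ℕ) := EuclideanSpace ℝ (Fin n)

/-- Smallest eigenvalue of a (Hermitian) real matrix. -/
noncomputable def lamMin {n : ℕ} (M : Matrix (Fin n) (Fin n) ℝ) : ℝ :=
  if h : M.IsHermitian then ⨅ i, h.eigenvalues i else 0

/-- Largest eigenvalue of a (Hermitian) real matrix. -/
noncomputable def lamMax {n : ℕ} (M : Matrix (Fin n) (Fin n) ℝ) : ℝ :=
  if h : M.IsHermitian then ⨆ i, h.eigenvalues i else 0

open scoped Classical in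
/-- The positive semidefinite square root `M^{1/2}` of a positive semidefinite matrix. -/
noncomputable def matSqrt {n : ℕ} (M : Matrix (Fin n) (Fin n) ℝ) : Matrix (Fin n) (Fin n) ℝ :=
  if h : M.PosSemidef then
    h.1.eigenvectorUnitary.1 * diagonal (fun i => Real.sqrt (h.1.eigenvalues i)) *
      (star h.1.eigenvectorUnitary : Matrix (Fin n) (Fin n) ℝ)
  else 0

/-- `M^{-1/2} := (M^{1/2})⁻¹`. -/
noncomputable def invSqrt {n : ℕ} (M : Matrix (Fin n) (Fin n) ℝ) : Matrix (Fin n) (Fin n) ℝ :=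
  (matSqrt M)⁻¹

/-- Operator norm of a matrix induced by the Euclidean norms. -/
noncomputable def opNorm {m n : ℕ} (M : Matrix (Fin m) (Fin n) ℝ) : ℝ :=
  ‖LinearMap.toContinuousLinearMap (Matrix.toEuclideanLin M)‖

/-- Matrix-vector multiplication as a map between Euclidean spaces. -/
def mv {m n : ℕ} (M : Matrix (Fin m) (Fin n) ℝ) (v : E n) : E m := WithLp.toLp 2 (M.mulVec v)

/-!
Along the trajectory the error `e = ẑ - T̂ ∘ x` solves `e' = A e - R(x)`. For `V = eᵀ P e` the
Lyapunov equation gives `V' = -‖Q^{1/2} e‖² - 2 ⟪R(x), P e⟫`. Writing the cross term as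
`⟪Q^{-1/2} P R(x), Q^{1/2} e⟫` and absorbing it by Young's inequality with weight `ε` leaves
`V' ≤ -c V + ‖Q^{-1/2} P‖² R̄² / ε`, because `λ_min(Q) ‖e‖² ≤ ‖Q^{1/2} e‖²` and `V ≤ λ_max(P) ‖e‖²`.
Grönwall's inequality bounds `V(t)`, and `λ_min(P) ‖e‖² ≤ V` converts this into the bound on `‖e‖`.
-/

open scoped RealInnerProductSpace

section MatrixVector

variable {m n k : ℕ}

lemma mv_sub (M : Matrix (Fin m) (Fin n) ℝ) (u w : E n) : mv M (u - w) = mv M u - mv M w :=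
  map_sub (toEuclideanLin M) u w

lemma mv_mul (M : Matrix (Fin m) (Fin n) ℝ) (N : Matrix (Fin n) (Fin k) ℝ) (v : E k) :
    mv (M * N) v = mv M (mv N v) := by
  simp [mv, mulVec_mulVec]

lemma mv_one (v : E n) : mv 1 v = v := by
  simp [mv]

lemma inner_mv_left (M : Matrix (Fin m) (Fin n) ℝ) (u : E n) (v : E m) :
    ⟪mv M u, v⟫ = ⟪u, mv Mᵀ v⟫ := by
  simp only [mv, EuclideanSpace.inner_eq_star_dotProduct, star_trivial, dotProduct_mulVec,
    mulVec_transpose]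

lemma dotProduct_mulVec_eq_inner (M : Matrix (Fin n) (Fin n) ℝ) (v : E n) :
    v ⬝ᵥ M *ᵥ v = ⟪v, mv M v⟫ := by
  rw [EuclideanSpace.inner_eq_star_dotProduct, dotProduct_comm]
  rfl

lemma opNorm_nonneg (M : Matrix (Fin m) (Fin n) ℝ) : 0 ≤ opNorm M :=
  norm_nonneg _

lemma norm_mv_le (M : Matrix (Fin m) (Fin n) ℝ) (v : E n) : ‖mv M v‖ ≤ opNorm M * ‖v‖ :=
  (LinearMap.toContinuousLinearMap (toEuclideanLin M)).le_opNorm v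

lemma continuous_mv (M : Matrix (Fin m) (Fin n) ℝ) : Continuous (mv M) :=
  (toEuclideanLin M).continuous_of_finiteDimensional

end MatrixVector

namespace Matrix

variable {n : ℕ} {M : Matrix (Fin n) (Fin n) ℝ}

namespace IsHermitian

lemma inner_mv_self_eq_sum (hM : M.IsHermitian) (v : E n) :
    ⟪v, mv M v⟫ = ∑ i, hM.eigenvalues i * ⟪hM.eigenvectorBasis i, v⟫ ^ 2 := by
  rw [← hM.eigenvectorBasis.sum_inner_mul_inner v (mv M v)]
  refine Finset.sum_congr rfl fun i _ => ?_
  have hEig : mv M (hM.eigenvectorBasis i) = hM.eigenvalues i • hM.eigenvectorBasis i :=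
    (WithLp.equiv 2 _).injective (hM.mulVec_eigenvectorBasis i)
  have hSelfAdj : ⟪hM.eigenvectorBasis i, mv M v⟫ = ⟪mv M (hM.eigenvectorBasis i), v⟫ := by
    rw [inner_mv_left, (isHermitian_iff_isSymm.1 hM).eq]
  rw [hSelfAdj, hEig, real_inner_smul_left, real_inner_comm v]
  ring

lemma lamMin_le_eigenvalues (hM : M.IsHermitian) (i : Fin n) : lamMin M ≤ hM.eigenvalues i := by
  rw [lamMin, dif_pos hM]
  exact ciInf_le (Set.finite_range _).bddBelow i

lemma eigenvalues_le_lamMax (hM : M.IsHermitian) (i : Fin n) : hM.eigenvalues i ≤ lamMax M := by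
  rw [lamMax, dif_pos hM]
  exact le_ciSup (Set.finite_range _).bddAbove i

lemma lamMin_mul_norm_sq_le (hM : M.IsHermitian) (v : E n) :
    lamMin M * ‖v‖ ^ 2 ≤ ⟪v, mv M v⟫ := by
  rw [inner_mv_self_eq_sum hM, ← hM.eigenvectorBasis.sum_sq_norm_inner_right, Finset.mul_sum]
  refine Finset.sum_le_sum fun i _ => ?_
  rw [Real.norm_eq_abs, sq_abs]
  exact mul_le_mul_of_nonneg_right (hM.lamMin_le_eigenvalues i) (sq_nonneg _)

lemma inner_mv_self_le (hM : M.IsHermitian) (v : E n) :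
    ⟪v, mv M v⟫ ≤ lamMax M * ‖v‖ ^ 2 := by
  rw [inner_mv_self_eq_sum hM, ← hM.eigenvectorBasis.sum_sq_norm_inner_right, Finset.mul_sum]
  refine Finset.sum_le_sum fun i _ => ?_
  rw [Real.norm_eq_abs, sq_abs]
  exact mul_le_mul_of_nonneg_right (hM.eigenvalues_le_lamMax i) (sq_nonneg _)

end IsHermitian

namespace PosDef

variable [Nonempty (Fin n)]

lemma lamMin_pos (hM : M.PosDef) : 0 < lamMin M := by
  obtain ⟨i, hi⟩ := exists_eq_ciInf_of_finite (f := hM.isHermitian.eigenvalues)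
  rw [lamMin, dif_pos hM.isHermitian, ← hi]
  exact hM.eigenvalues_pos i

lemma lamMax_pos (hM : M.PosDef) : 0 < lamMax M :=
  let i := Classical.arbitrary (Fin n)
  (hM.eigenvalues_pos i).trans_le (hM.isHermitian.eigenvalues_le_lamMax i)

end PosDef

variable {Q : Matrix (Fin n) (Fin n) ℝ}

lemma PosSemidef.matSqrt_mul_self (hQ : Q.PosSemidef) : matSqrt Q * matSqrt Q = Q := by
  have hU : (star hQ.1.eigenvectorUnitary : Matrix (Fin n) (Fin n) ℝ) *
      hQ.1.eigenvectorUnitary.1 = 1 := Unitary.coe_star_mul_self _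
  rw [matSqrt, dif_pos hQ]
  conv_rhs => rw [hQ.1.spectral_theorem, Unitary.conjStarAlgAut_apply]
  simp only [mul_assoc]
  rw [← mul_assoc _ hQ.1.eigenvectorUnitary.1, hU, one_mul, ← mul_assoc (diagonal _),
    diagonal_mul_diagonal]
  congr 3
  funext i
  simp [Real.mul_self_sqrt (hQ.eigenvalues_nonneg i)]

lemma PosSemidef.transpose_matSqrt (hQ : Q.PosSemidef) : (matSqrt Q)ᵀ = matSqrt Q := by
  rw [← conjTranspose_eq_transpose_of_trivial, matSqrt, dif_pos hQ]
  simp [star_eq_conjTranspose, mul_assoc]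

lemma PosSemidef.inner_mv_self_eq_norm_sq (hQ : Q.PosSemidef) (v : E n) :
    ⟪v, mv Q v⟫ = ‖mv (matSqrt Q) v‖ ^ 2 := by
  rw [← real_inner_self_eq_norm_sq, inner_mv_left, hQ.transpose_matSqrt, ← mv_mul,
    hQ.matSqrt_mul_self]

lemma PosDef.isUnit_det_matSqrt (hQ : Q.PosDef) : IsUnit (matSqrt Q).det := by
  rw [isUnit_iff_ne_zero, ← pow_ne_zero_iff two_ne_zero, sq, ← det_mul,
    hQ.posSemidef.matSqrt_mul_self]
  exact hQ.det_pos.ne'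

lemma PosDef.inner_eq_inner_invSqrt_matSqrt (hQ : Q.PosDef) (u v : E n) :
    ⟪u, v⟫ = ⟪mv (invSqrt Q) u, mv (matSqrt Q) v⟫ := by
  rw [inner_mv_left, invSqrt, transpose_nonsing_inv, hQ.posSemidef.transpose_matSqrt, ← mv_mul,
    nonsing_inv_mul _ hQ.isUnit_det_matSqrt, mv_one]

end Matrix

section Lyapunov

variable {n : ℕ} {A P Q : Matrix (Fin n) (Fin n) ℝ}

lemma two_mul_inner_mv_of_lyapunov (hP : P.IsSymm) (hLyap : P * A + Aᵀ * P = -Q) (a : E n) :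
    2 * ⟪mv A a, mv P a⟫ = -⟪a, mv Q a⟫ := by
  have hPA : ⟪mv A a, mv P a⟫ = ⟪a, mv (P * A) a⟫ := by
    rw [real_inner_comm, inner_mv_left, hP.eq, mv_mul]
  have hAP : ⟪mv A a, mv P a⟫ = ⟪a, mv (Aᵀ * P) a⟫ := by
    rw [inner_mv_left, mv_mul]
  have hSum : mv (P * A) a + mv (Aᵀ * P) a = -mv Q a := by
    simpa [mv, add_mulVec, neg_mulVec] using congrArg (fun M => mv M a) hLyap
  calc 2 * ⟪mv A a, mv P a⟫ = ⟪a, mv (P * A) a + mv (Aᵀ * P) a⟫ := by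
        rw [inner_add_right, ← hPA, ← hAP, two_mul]
    _ = -⟪a, mv Q a⟫ := by rw [hSum, inner_neg_right]

lemma HasDerivAt.inner_mv_self {e : ℝ → E n} {e' : E n} {t : ℝ} (he : HasDerivAt e e' t)
    (hP : P.IsSymm) :
    HasDerivAt (fun s => ⟪e s, mv P (e s)⟫) (2 * ⟪e', mv P (e t)⟫) t := by
  have hPe : HasDerivAt (fun s => mv P (e s)) (mv P e') t :=
    (LinearMap.toContinuousLinearMap (toEuclideanLin P)).hasFDerivAt.comp_hasDerivAt t he
  refine (he.inner ℝ hPe).congr_deriv ?_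
  rw [real_inner_comm, ← hP.eq, ← inner_mv_left, hP.eq, two_mul]

lemma two_mul_inner_mv_sub_le_of_lyapunov [Nonempty (Fin n)] (hP : P.PosDef) (hQ : Q.PosDef)
    (hLyap : P * A + Aᵀ * P = -Q) {ε : ℝ} (hε₀ : 0 < ε) (hε₁ : ε < 1) (a r : E n) :
    2 * ⟪mv A a - r, mv P a⟫ ≤
      -((1 - ε) * lamMin Q / lamMax P) * ⟪a, mv P a⟫ + (opNorm (invSqrt Q * P) * ‖r‖) ^ 2 / ε := by
  have hPsymm : P.IsSymm := isHermitian_iff_isSymm.1 hP.isHermitian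
  set u := ‖mv (matSqrt Q) a‖
  set b := opNorm (invSqrt Q * P) * ‖r‖
  have hDissipation : 2 * ⟪mv A a - r, mv P a⟫ = -u ^ 2 - 2 * ⟪r, mv P a⟫ := by
    rw [inner_sub_left, mul_sub, two_mul_inner_mv_of_lyapunov hPsymm hLyap,
      hQ.posSemidef.inner_mv_self_eq_norm_sq]
  -- `⟪r, P a⟫ = ⟪Q^{-1/2} P r, Q^{1/2} a⟫`, then Cauchy–Schwarz
  have hCross : -⟪r, mv P a⟫ ≤ b * u := by
    rw [← hPsymm.eq, ← inner_mv_left, hQ.inner_eq_inner_invSqrt_matSqrt, ← mv_mul, neg_le]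
    calc -(b * u) ≤ -(‖mv (invSqrt Q * P) r‖ * u) := by
          gcongr
          exact norm_mv_le _ _
      _ ≤ _ := neg_le_of_abs_le (abs_real_inner_le_norm _ _)
  have hYoung : 2 * b * u ≤ ε * u ^ 2 + b ^ 2 / ε := by
    have hSq : ε * u ^ 2 + b ^ 2 / ε - 2 * b * u = (ε * u - b) ^ 2 / ε := by
      field_simp
      ring
    have : 0 ≤ (ε * u - b) ^ 2 / ε := by positivity
    linarith
  have hQa : lamMin Q * ‖a‖ ^ 2 ≤ u ^ 2 :=
    hQ.posSemidef.inner_mv_self_eq_norm_sq a ▸ hQ.isHermitian.lamMin_mul_norm_sq_le a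
  have hDecay : (1 - ε) * lamMin Q / lamMax P * ⟪a, mv P a⟫ ≤ (1 - ε) * u ^ 2 := by
    calc (1 - ε) * lamMin Q / lamMax P * ⟪a, mv P a⟫
        ≤ (1 - ε) * lamMin Q / lamMax P * (lamMax P * ‖a‖ ^ 2) := by
          have := hQ.lamMin_pos
          have := hP.lamMax_pos
          gcongr
          exact hP.isHermitian.inner_mv_self_le a
      _ = (1 - ε) * (lamMin Q * ‖a‖ ^ 2) := by
          field_simp [hP.lamMax_pos.ne']
      _ ≤ (1 - ε) * u ^ 2 := by gcongr
  linarith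

end Lyapunov

lemma le_exp_mul_add_of_deriv_le {V V' : ℝ → ℝ} {c K : ℝ} (hc : 0 < c) (hK : 0 ≤ K)
    (hV : ∀ t ≥ (0 : ℝ), HasDerivAt V (V' t) t) (hV' : ∀ t ≥ (0 : ℝ), V' t ≤ -c * V t + K)
    {t : ℝ} (ht : 0 ≤ t) : V t ≤ V 0 * Real.exp (-c * t) + K / c := by
  have hGronwall := le_gronwallBound_of_liminf_deriv_right_le (δ := V 0) (a := 0) (b := t)
    (fun s hs => (hV s hs.1).continuousAt.continuousWithinAt)
    (fun s hs _ hr => by simpa [slope_def_field, div_eq_inv_mul] using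
      (hV s hs.1).hasDerivWithinAt.liminf_right_slope_le hr)
    le_rfl (fun s hs => hV' s hs.1) t ⟨ht, le_rfl⟩
  rw [gronwallBound_of_K_ne_0 (neg_ne_zero.2 hc.ne'), sub_zero] at hGronwall
  have : 0 ≤ K / c * Real.exp (-c * t) := by positivity
  calc V t ≤ V 0 * Real.exp (-c * t) + K / -c * (Real.exp (-c * t) - 1) := hGronwall
    _ ≤ V 0 * Real.exp (-c * t) + K / c := by rw [div_neg]; linarith

lemma Matrix.PosDef.norm_le_of_inner_mv_self_le {n : ℕ} [Nonempty (Fin n)]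
    {P : Matrix (Fin n) (Fin n) ℝ} (hP : P.PosDef) {v : E n} {V₀ c ε b t : ℝ} (hV₀ : 0 ≤ V₀)
    (hc : 0 < c) (hε : 0 < ε) (hb : 0 ≤ b)
    (hv : ⟪v, mv P v⟫ ≤ V₀ * Real.exp (-c * t) + b ^ 2 / ε / c) :
    ‖v‖ ≤ √(V₀ / lamMin P) * Real.exp (-c * t / 2) + √(1 / (ε * c * lamMin P)) * b := by
  have hl := hP.lamMin_pos
  have hExp : Real.exp (-c * t / 2) ^ 2 = Real.exp (-c * t) := by
    rw [← Real.exp_nat_mul]; ring_nf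
  have hSq : ‖v‖ ^ 2 ≤ (√(V₀ / lamMin P) * Real.exp (-c * t / 2)) ^ 2
      + (√(1 / (ε * c * lamMin P)) * b) ^ 2 := by
    rw [mul_pow, mul_pow, Real.sq_sqrt (by positivity), Real.sq_sqrt (by positivity), hExp]
    calc ‖v‖ ^ 2 ≤ (V₀ * Real.exp (-c * t) + b ^ 2 / ε / c) / lamMin P := by
          rw [le_div_iff₀ hl]
          linarith [hP.isHermitian.lamMin_mul_norm_sq_le v]
      _ = _ := by field_simp
  have hp : 0 ≤ √(V₀ / lamMin P) * Real.exp (-c * t / 2) := by positivity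
  have hq : 0 ≤ √(1 / (ε * c * lamMin P)) * b := mul_nonneg (Real.sqrt_nonneg _) hb
  exact (pow_le_pow_iff_left₀ (norm_nonneg v) (add_nonneg hp hq) two_ne_zero).1
    (hSq.trans (by nlinarith [mul_nonneg hp hq]))

section Observer

variable {nx ny nz : ℕ}

noncomputable def pdeResidual (f : E nx → E nx) (h : E nx → E ny) (A : Matrix (Fin nz) (Fin nz) ℝ)
    (B : Matrix (Fin nz) (Fin ny) ℝ) (T : E nx → E nz) (p : E nx) : E nz :=
  fderiv ℝ T p (f p) - mv A (T p) - mv B (h p)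

lemma continuous_pdeResidual {f : E nx → E nx} {h : E nx → E ny} {T : E nx → E nz}
    (hf : Continuous f) (hh : Continuous h) (hT : ContDiff ℝ 1 T) (A : Matrix (Fin nz) (Fin nz) ℝ)
    (B : Matrix (Fin nz) (Fin ny) ℝ) : Continuous (pdeResidual f h A B T) :=
  (((hT.continuous_fderiv one_ne_zero).clm_apply hf).sub
    ((continuous_mv A).comp hT.continuous)).sub ((continuous_mv B).comp hh)

lemma hasDerivAt_observerError {f : E nx → E nx} {h : E nx → E ny} {T : E nx → E nz}
    {A : Matrix (Fin nz) (Fin nz) ℝ} {B : Matrix (Fin nz) (Fin ny) ℝ} {x : ℝ → E nx}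
    {zh : ℝ → E nz} {t : ℝ} (hx : HasDerivAt x (f (x t)) t)
    (hz : HasDerivAt zh (mv A (zh t) + mv B (h (x t))) t) (hT : DifferentiableAt ℝ T (x t)) :
    HasDerivAt (fun s => zh s - T (x s))
      (mv A (zh t - T (x t)) - pdeResidual f h A B T (x t)) t := by
  refine (hz.sub (hT.hasFDerivAt.comp_hasDerivAt t hx)).congr_deriv ?_
  rw [pdeResidual, mv_sub]
  abel

end Observer

theorem stmt4_general {nx ny nz : ℕ}
    (f : E nx → E nx) (hf : Continuous f)
    (h : E nx → E ny) (hh : Continuous h)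
    (A : Matrix (Fin nz) (Fin nz) ℝ) (B : Matrix (Fin nz) (Fin ny) ℝ)
    (X : Set (E nx)) (hXc : IsCompact X)
    (x : ℝ → E nx) (hx : ∀ t ≥ (0:ℝ), HasDerivAt x (f (x t)) t)
    (hxX : ∀ t ≥ (0:ℝ), x t ∈ X)
    (zh : ℝ → E nz)
    (hz : ∀ t ≥ (0:ℝ), HasDerivAt zh (mv A (zh t) + mv B (h (x t))) t)
    (T : E nx → E nz) (hT : ContDiff ℝ 1 T)
    (R : E nx → E nz)
    (hR : ∀ p, R p = fderiv ℝ T p (f p) - mv A (T p) - mv B (h p))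
    (Rbar : ℝ) (hRbar : Rbar = sSup ((fun p => ‖R p‖) '' X))
    (Q P : Matrix (Fin nz) (Fin nz) ℝ) (hQ : Q.PosDef) (hP : P.PosDef)
    (hLyap : P * A + Aᵀ * P = -Q)
    (ε : ℝ) (hε : ε ∈ Set.Ioo (0:ℝ) 1) :
    ∀ t ≥ (0:ℝ),
      ‖zh t - T (x t)‖ ≤
        Real.sqrt (((zh 0 - T (x 0)) ⬝ᵥ P.mulVec (zh 0 - T (x 0))) / lamMin P) *
            Real.exp (-((1 - ε) * lamMin Q / lamMax P) * t / 2) +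
          Real.sqrt (1 / (ε * ((1 - ε) * lamMin Q / lamMax P) * lamMin P)) *
            opNorm (invSqrt Q * P) * Rbar := by
  obtain ⟨hε₀, hε₁⟩ := hε
  have hResidual : R = pdeResidual f h A B T := funext hR
  have hRle : ∀ t ≥ (0:ℝ), ‖R (x t)‖ ≤ Rbar := fun t ht => hRbar ▸ le_csSup
    (hXc.image (hResidual ▸ continuous_pdeResidual hf hh hT A B).norm).bddAbove ⟨x t, hxX t ht, rfl⟩
  have hRbar_nonneg : 0 ≤ Rbar := (norm_nonneg _).trans (hRle 0 le_rfl)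
  intro t ht
  rcases isEmpty_or_nonempty (Fin nz) with hnz | hnz
  · rw [Subsingleton.elim (zh t - T (x t)) 0, norm_zero]
    have := opNorm_nonneg (invSqrt Q * P)
    positivity
  set c := (1 - ε) * lamMin Q / lamMax P
  have hc : 0 < c := div_pos (mul_pos (sub_pos.2 hε₁) hQ.lamMin_pos) hP.lamMax_pos
  set e : ℝ → E nz := fun s => zh s - T (x s)
  have hV : ∀ s ≥ (0:ℝ), HasDerivAt (fun s => ⟪e s, mv P (e s)⟫)
      (2 * ⟪mv A (e s) - R (x s), mv P (e s)⟫) s := fun s hs =>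
    (hResidual ▸ hasDerivAt_observerError (hx s hs) (hz s hs)
      (hT.differentiable one_ne_zero _)).inner_mv_self (isHermitian_iff_isSymm.1 hP.isHermitian)
  have hV' : ∀ s ≥ (0:ℝ), 2 * ⟪mv A (e s) - R (x s), mv P (e s)⟫ ≤
      -c * ⟪e s, mv P (e s)⟫ + (opNorm (invSqrt Q * P) * Rbar) ^ 2 / ε := fun s hs =>
    (two_mul_inner_mv_sub_le_of_lyapunov hP hQ hLyap hε₀ hε₁ _ _).trans (by
      have := opNorm_nonneg (invSqrt Q * P)
      gcongr
      exact hRle s hs)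
  have hV₀ : 0 ≤ ⟪e 0, mv P (e 0)⟫ :=
    (mul_nonneg hP.lamMin_pos.le (sq_nonneg _)).trans (hP.isHermitian.lamMin_mul_norm_sq_le _)
  rw [← WithLp.ofLp_sub (x := zh 0), dotProduct_mulVec_eq_inner, mul_assoc _ (opNorm _)]
  exact hP.norm_le_of_inner_mv_self_le hV₀ hc hε₀ (mul_nonneg (opNorm_nonneg _) hRbar_nonneg)
    (le_exp_mul_add_of_deriv_le hc (by positivity) hV hV' ht)

theorem stmt4 {nx ny nz : ℕ}
    (f : E nx → E nx) (hf : Continuous f)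
    (h : E nx → E ny) (hh : Continuous h)
    (A : Matrix (Fin nz) (Fin nz) ℝ) (B : Matrix (Fin nz) (Fin ny) ℝ)
    (X : Set (E nx)) (hXne : X.Nonempty) (hXc : IsCompact X)
    (x : ℝ → E nx) (hx : ∀ t ≥ (0:ℝ), HasDerivAt x (f (x t)) t)
    (hxX : ∀ t ≥ (0:ℝ), x t ∈ X)
    (zh : ℝ → E nz)
    (hz : ∀ t ≥ (0:ℝ), HasDerivAt zh (mv A (zh t) + mv B (h (x t))) t)
    (T : E nx → E nz) (hT : ContDiff ℝ 1 T)
    (R : E nx → E nz)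
    (hR : ∀ p, R p = fderiv ℝ T p (f p) - mv A (T p) - mv B (h p))
    (Rbar : ℝ) (hRbar : Rbar = sSup ((fun p => ‖R p‖) '' X))
    (Q P : Matrix (Fin nz) (Fin nz) ℝ) (hQ : Q.PosDef) (hP : P.PosDef)
    (hLyap : P * A + Aᵀ * P = -Q)
    (ε : ℝ) (hε : ε ∈ Set.Ioo (0:ℝ) 1) :
    ∀ t ≥ (0:ℝ),
      ‖zh t - T (x t)‖ ≤
        Real.sqrt (((zh 0 - T (x 0)) ⬝ᵥ P.mulVec (zh 0 - T (x 0))) / lamMin P) *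
            Real.exp (-((1 - ε) * lamMin Q / lamMax P) * t / 2) +
          Real.sqrt (1 / (ε * ((1 - ε) * lamMin Q / lamMax P) * lamMin P)) *
            opNorm (invSqrt Q * P) * Rbar :=
  stmt4_general f hf h hh A B X hXc x hx hxX zh hz T hT R hR Rbar hRbar Q P hQ hP hLyap ε hε
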